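/- arXiv:1305.2835 — 2 statements merged into one kernel-verified Lean document; each statement's English description precedes it below -/
import Mathlib

section
/- The top-k dominating points of a finite set S of 2-dimensional points are contained in the union of the first k layers of maxima of S. Precisely: if p lies in layer i with i ≥ k+1, then there exist at least k points of S with dominance score strictly greater than that of p, so p cannot be among any set of k points of S with the highest dominance scores. -/
open scoped Classical

/-- `p` dominates `q`. -/
def dom (p q : ℝ × ℝ) : Prop :=
  (p.1 ≤ q.1 ∧ p.2 < q.2) ∨ (p.1 < q.1 ∧ p.2 ≤ q.2)

/-- Dominance score of `p` in `S`. -/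
noncomputable def score (S : Finset (ℝ × ℝ)) (p : ℝ × ℝ) : ℕ :=
  (S.filter (fun q => dom p q)).card

/-- Maxima of `S`: points dominated by no point of `S`. -/
noncomputable def maxima (S : Finset (ℝ × ℝ)) : Finset (ℝ × ℝ) :=
  S.filter (fun p => ∀ q ∈ S, ¬ dom q p)

/-- Points remaining after removing the first `i` layers of maxima. -/
noncomputable def rest (S : Finset (ℝ × ℝ)) : ℕ → Finset (ℝ × ℝ)
  | 0 => S
  | i + 1 => rest S i \ maxima (rest S i)

/-- The `i`-th layer of maxima (layers indexed from 1). -/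
noncomputable def layer (S : Finset (ℝ × ℝ)) (i : ℕ) : Finset (ℝ × ℝ) :=
  maxima (rest S (i - 1))

/-- There is a dominance chain of length `j` in `S` starting at `p`
(each next element dominates the previous). -/
def IsChainFrom (S : Finset (ℝ × ℝ)) (p : ℝ × ℝ) (j : ℕ) : Prop :=
  ∃ f : ℕ → ℝ × ℝ, f 0 = p ∧ (∀ t, t < j → f t ∈ S) ∧
    ∀ t, t + 1 < j → dom (f (t + 1)) (f t)

lemma dom_trans {a b c : ℝ × ℝ} (h1 : dom a b) (h2 : dom b c) : dom a c := by
  unfold dom at *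
  rcases h1 with ⟨x1, y1⟩ | ⟨x1, y1⟩ <;> rcases h2 with ⟨x2, y2⟩ | ⟨x2, y2⟩ <;>
    first
      | (left; exact ⟨by linarith, by linarith⟩)
      | (right; exact ⟨by linarith, by linarith⟩)

lemma dom_irrefl (a : ℝ × ℝ) : ¬ dom a a := by simp [dom]

lemma score_lt {S : Finset (ℝ × ℝ)} {a b : ℝ × ℝ} (ha : a ∈ S) (h : dom b a) :
    score S a < score S b := by
  apply Finset.card_lt_card
  rw [Finset.ssubset_def]
  constructor
  · intro q hq
    rw [Finset.mem_filter] at hq ⊢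
    exact ⟨hq.1, dom_trans h hq.2⟩
  · intro hsub
    have ha' : a ∈ S.filter (fun q => dom a q) :=
      hsub (Finset.mem_filter.mpr ⟨ha, h⟩)
    exact dom_irrefl a (Finset.mem_filter.mp ha').2

lemma rest_subset (S : Finset (ℝ × ℝ)) : ∀ i, rest S i ⊆ S := by
  intro i
  induction i with
  | zero => exact subset_rfl
  | succ n ih => exact (Finset.sdiff_subset).trans ih

lemma chain_of_rest (S : Finset (ℝ × ℝ)) : ∀ i, ∀ p ∈ rest S i,
    ∃ f : ℕ → ℝ × ℝ, f 0 = p ∧ (∀ t, t ≤ i → f t ∈ S) ∧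
      ∀ t, t < i → dom (f (t + 1)) (f t) := by
  intro i
  induction i with
  | zero =>
    intro p hp
    exact ⟨fun _ => p, rfl, fun t _ => rest_subset S 0 hp, fun t ht => by omega⟩
  | succ n ih =>
    intro p hp
    have hp1 : p ∈ rest S n := (Finset.mem_sdiff.mp hp).1
    have hp2 : p ∉ maxima (rest S n) := (Finset.mem_sdiff.mp hp).2
    have hq : ∃ q ∈ rest S n, dom q p := by
      by_contra h
      push_neg at h
      exact hp2 (Finset.mem_filter.mpr ⟨hp1, h⟩)
    obtain ⟨q, hq, hdq⟩ := hq
    obtain ⟨f, hf0, hfS, hfd⟩ := ih q hq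
    refine ⟨fun t => match t with | 0 => p | t + 1 => f t, rfl, ?_, ?_⟩
    · intro t ht
      match t with
      | 0 => exact rest_subset S (n + 1) hp
      | s + 1 => exact hfS s (by omega)
    · intro t ht
      match t with
      | 0 => simpa [hf0] using hdq
      | s + 1 => exact hfd s (by omega)

lemma score_chain {S : Finset (ℝ × ℝ)} {f : ℕ → ℝ × ℝ} {i : ℕ}
    (hfS : ∀ t, t ≤ i → f t ∈ S) (hfd : ∀ t, t < i → dom (f (t + 1)) (f t)) :
    ∀ t, t ≤ i → ∀ s, s < t → score S (f s) < score S (f t) := by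
  intro t
  induction t with
  | zero => intro _ s hs; omega
  | succ n ih =>
    intro hn s hs
    have step : score S (f n) < score S (f (n + 1)) :=
      score_lt (hfS n (by omega)) (hfd n (by omega))
    rcases Nat.lt_succ_iff_lt_or_eq.mp hs with h | h
    · exact lt_trans (ih (by omega) s h) step
    · subst h; exact step

theorem topk_in_first_k_layers (S : Finset (ℝ × ℝ)) (k i : ℕ) (hi : k + 1 ≤ i)
    (p : ℝ × ℝ) (hp : p ∈ layer S i) :
    (∃ T : Finset (ℝ × ℝ), T ⊆ S ∧ k ≤ T.card ∧ ∀ q ∈ T, score S p < score S q) ∧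
    ∀ K : Finset (ℝ × ℝ), K ⊆ S → K.card = k →
      (∀ q ∈ S, q ∉ K → ∀ r ∈ K, score S q ≤ score S r) → p ∉ K := by
  have hpr : p ∈ rest S (i - 1) := (Finset.mem_filter.mp hp).1
  obtain ⟨f, hf0, hfS, hfd⟩ := chain_of_rest S (i - 1) p hpr
  have hki : k ≤ i - 1 := by omega
  set T : Finset (ℝ × ℝ) := (Finset.Icc 1 k).image f with hT
  have hTS : T ⊆ S := by
    intro q hq
    obtain ⟨t, ht, rfl⟩ := Finset.mem_image.mp hq
    exact hfS t (le_trans (Finset.mem_Icc.mp ht).2 hki)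
  have hTsc : ∀ q ∈ T, score S p < score S q := by
    intro q hq
    obtain ⟨t, ht, rfl⟩ := Finset.mem_image.mp hq
    have ht' := Finset.mem_Icc.mp ht
    have := score_chain hfS hfd t (le_trans ht'.2 hki) 0 (by omega)
    rwa [hf0] at this
  have hTcard : T.card = k := by
    rw [hT, Finset.card_image_of_injOn, Nat.card_Icc]
    · omega
    · intro s hs t ht hst
      by_contra hne
      rcases lt_or_gt_of_ne hne with h | h
      · have := score_chain hfS hfd t (le_trans (Finset.mem_Icc.mp ht).2 hki) s h
        rw [hst] at this; exact lt_irrefl _ this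
      · have := score_chain hfS hfd s (le_trans (Finset.mem_Icc.mp hs).2 hki) t h
        rw [hst] at this; exact lt_irrefl _ this
  refine ⟨⟨T, hTS, hTcard.ge, hTsc⟩, ?_⟩
  intro K hKS hKcard hKmin hpK
  have hpT : p ∉ T := fun h => lt_irrefl _ (hTsc p h)
  have hsub : T ∩ K ⊆ K.erase p := by
    intro q hq
    have hq' := Finset.mem_inter.mp hq
    exact Finset.mem_erase.mpr ⟨fun h => hpT (h ▸ hq'.1), hq'.2⟩
  have hcardInter : (T ∩ K).card ≤ k - 1 := by
    have := Finset.card_le_card hsub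
    rwa [Finset.card_erase_of_mem hpK, hKcard] at this
  have hk1 : 1 ≤ k := by
    by_contra h
    have hK0 : K.card = 0 := by omega
    rw [Finset.card_eq_zero.mp hK0] at hpK
    exact absurd hpK (Finset.notMem_empty p)
  have hsd : (T \ K).Nonempty := by
    rw [← Finset.card_pos]
    have := Finset.card_inter_add_card_sdiff T K
    omega
  obtain ⟨q, hq⟩ := hsd
  have hq' := Finset.mem_sdiff.mp hq
  have hle := hKmin q (hTS hq'.1) hq'.2 p hpK
  exact absurd hle (not_le.mpr (hTsc q hq'.1))
end

section
/- Removing a point from a finite set S can only affect the layer membership of points in the same or later layers: if q is in layer j of S and p is in layer i of S with j < i, then q is still in layer j of S \ {p}. -/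
open scoped Classical

/-!
A point `p` of layer `i` survives the first `i - 1` peeling rounds, so in each round `k < i - 1`
some point of `rest S k` dominates it. Since dominance is transitive, deleting a point that is
itself dominated inside `T` changes no maximum of `T`; hence peeling `S.erase p` for `k ≤ i - 1`
rounds leaves exactly `(rest S k).erase p`, and the layers `j < i` are the same as in `S`.
-/

lemma dom_iff_lt {p q : ℝ × ℝ} : dom p q ↔ p < q := by
  rw [dom, Prod.lt_iff, or_comm]

lemma maxima_erase_of_dom {T : Finset (ℝ × ℝ)} {p r : ℝ × ℝ} (hr : r ∈ T) (hrp : dom r p) :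
    maxima (T.erase p) = maxima T := by
  rw [dom_iff_lt] at hrp
  ext q
  simp only [maxima, Finset.mem_filter, Finset.mem_erase, dom_iff_lt]
  constructor
  · rintro ⟨⟨-, hqT⟩, hmax⟩
    refine ⟨hqT, fun s hs hsq => ?_⟩
    by_cases hsp : s = p
    · exact hmax r ⟨hrp.ne, hr⟩ (hrp.trans (hsp ▸ hsq))
    · exact hmax s ⟨hsp, hs⟩ hsq
  · rintro ⟨hqT, hmax⟩
    refine ⟨⟨?_, hqT⟩, fun s hs => hmax s hs.2⟩
    rintro rfl
    exact hmax r hr hrp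

lemma rest_antitone (S : Finset (ℝ × ℝ)) : Antitone (rest S) :=
  antitone_nat_of_succ_le fun _ => Finset.sdiff_subset

lemma exists_dom_of_mem_rest_succ {S : Finset (ℝ × ℝ)} {p : ℝ × ℝ} {k : ℕ}
    (hp : p ∈ rest S (k + 1)) : ∃ r ∈ rest S k, dom r p := by
  simp only [rest, maxima, Finset.mem_sdiff, Finset.mem_filter, not_and, not_forall,
    not_not, exists_prop] at hp
  exact hp.2 hp.1

lemma maxima_rest_erase_of_mem_rest_succ {S : Finset (ℝ × ℝ)} {p : ℝ × ℝ} {k : ℕ}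
    (hp : p ∈ rest S (k + 1)) : maxima ((rest S k).erase p) = maxima (rest S k) := by
  obtain ⟨r, hr, hrp⟩ := exists_dom_of_mem_rest_succ hp
  exact maxima_erase_of_dom hr hrp

lemma rest_erase_of_mem_rest {S : Finset (ℝ × ℝ)} {p : ℝ × ℝ} :
    ∀ {k : ℕ}, p ∈ rest S k → rest (S.erase p) k = (rest S k).erase p
  | 0, _ => rfl
  | k + 1, hp => by
    rw [rest, rest, rest_erase_of_mem_rest (rest_antitone S k.le_succ hp),
      maxima_rest_erase_of_mem_rest_succ hp, Finset.erase_sdiff_comm]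

theorem erase_preserves_earlier_layers (S : Finset (ℝ × ℝ)) (i j : ℕ)
    (hj : 1 ≤ j) (hji : j < i) (p q : ℝ × ℝ)
    (hp : p ∈ layer S i) (hq : q ∈ layer S j) :
    q ∈ layer (S.erase p) j := by
  obtain ⟨k, rfl⟩ := Nat.exists_eq_add_of_le' hj
  have hp_rest : p ∈ rest S (k + 1) :=
    rest_antitone S (Nat.le_sub_one_of_lt hji) (Finset.filter_subset _ _ hp)
  have hp_rest' : p ∈ rest S k := rest_antitone S k.le_succ hp_rest
  rwa [layer, Nat.add_sub_cancel, rest_erase_of_mem_rest hp_rest',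
    maxima_rest_erase_of_mem_rest_succ hp_rest]
end
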